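/- Let θ ∈ (0,1) be irrational with convergents p_n/q_n and l_n := |p_n - q_n θ|. For any x ∈ ℝ/ℤ and n ≥ 3, the finite orbit {x, x+θ, x+2θ, ..., x+q_n θ} (mod 1) partitions the circle into arcs each of whose lengths lies between l_n and l_{n-2}. -/
import Mathlib


/-- Data of the continued fraction expansion `θ = [0; a 1, a 2, ...]` of an irrational
`θ ∈ (0,1)` (encoded via the Gauss map iterates `t n`), together with the convergents
`p n / q n` produced by the standard recursion
`p n = a n * p (n-1) + p (n-2)`, `q n = a n * q (n-1) + q (n-2)`,
with `p 0 = 0`, `q 0 = 1`, and (`p (-1) = 1`, `q (-1) = 0`, folded into the values at `1`). -/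
structure CFData (θ : ℝ) : Type where
  /-- the partial quotients `a 1, a 2, ...` (the value `a 0` is unused) -/
  a : ℕ → ℕ
  /-- the Gauss map iterates: `t 0 = θ`, `t (n+1) = (t n)⁻¹ - a (n+1)` -/
  t : ℕ → ℝ
  t_zero : t 0 = θ
  t_mem : ∀ n, t n ∈ Set.Ioo (0 : ℝ) 1
  a_floor : ∀ n, (a (n + 1) : ℤ) = ⌊(t n)⁻¹⌋
  t_succ : ∀ n, t (n + 1) = (t n)⁻¹ - (a (n + 1) : ℝ)
  /-- numerators of the convergents -/
  p : ℕ → ℕ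
  /-- denominators of the convergents -/
  q : ℕ → ℕ
  p_zero : p 0 = 0
  p_one : p 1 = 1
  q_zero : q 0 = 1
  q_one : q 1 = a 1
  p_rec : ∀ n, p (n + 2) = a (n + 2) * p (n + 1) + p n
  q_rec : ∀ n, q (n + 2) = a (n + 2) * q (n + 1) + q n

/-- `l n = |p n - q n · θ|`. -/
noncomputable def CFData.l {θ : ℝ} (cf : CFData θ) (n : ℕ) : ℝ :=
  |(cf.p n : ℝ) - (cf.q n : ℝ) * θ|

namespace CFData
variable {θ : ℝ} (cf : CFData θ)

lemma t_pos (k : ℕ) : 0 < cf.t k := (cf.t_mem k).1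
lemma t_lt_one (k : ℕ) : cf.t k < 1 := (cf.t_mem k).2

lemma a_pos (k : ℕ) : 1 ≤ cf.a (k + 1) := by
  have h := cf.a_floor k
  have h1 : (1 : ℝ) < (cf.t k)⁻¹ := by
    rw [lt_inv_comm₀ one_pos (cf.t_pos k)]; simpa using cf.t_lt_one k
  have : (1 : ℤ) ≤ ⌊(cf.t k)⁻¹⌋ := by
    rw [Int.le_floor]; push_cast; exact h1.le
  rw [← h] at this; exact_mod_cast this

lemma q_pos : ∀ k, 1 ≤ cf.q k := by
  intro k
  induction k using Nat.twoStepInduction with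
  | zero => simp [cf.q_zero]
  | one => simpa [cf.q_one] using cf.a_pos 0
  | more k ih _ => rw [cf.q_rec]; omega

lemma q_lt (k : ℕ) : cf.q (k + 1) < cf.q (k + 2) := by
  have h := cf.q_rec k
  have h1 := cf.a_pos (k + 1)
  have h2 := cf.q_pos k
  have h3 := cf.q_pos (k + 1)
  nlinarith

/-- signed error -/
noncomputable def E (k : ℕ) : ℝ := (cf.q k : ℝ) * θ - cf.p k

/-- product of gauss iterates -/
noncomputable def P (k : ℕ) : ℝ := ∏ j ∈ Finset.range (k + 1), cf.t j

lemma P_pos (k : ℕ) : 0 < cf.P k :=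
  Finset.prod_pos fun j _ => cf.t_pos j

lemma P_succ (k : ℕ) : cf.P (k + 1) = cf.P k * cf.t (k + 1) := by
  simp only [P, Finset.prod_range_succ]

lemma P_lt_one (k : ℕ) : cf.P k < 1 := by
  induction k with
  | zero => simpa [P] using cf.t_lt_one 0
  | succ k ih =>
    rw [P_succ]
    nlinarith [cf.P_pos k, cf.t_pos (k+1), cf.t_lt_one (k+1)]

lemma E_rec (k : ℕ) : cf.E (k + 2) = cf.a (k + 2) * cf.E (k + 1) + cf.E k := by
  simp only [E, cf.q_rec, cf.p_rec]; push_cast; ring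

lemma E_eq : ∀ k, cf.E k = (-1 : ℝ) ^ k * cf.P k := by
  intro k
  induction k using Nat.twoStepInduction with
  | zero => simp [E, P, cf.q_zero, cf.p_zero, cf.t_zero]
  | one =>
    have h := cf.t_succ 0
    have h0 : cf.t 0 = θ := cf.t_zero
    have hθ : (0:ℝ) < θ := by rw [← h0]; exact cf.t_pos 0
    simp only [E, P, cf.q_one, cf.p_one]
    rw [Finset.prod_range_succ, Finset.prod_range_one, h0, h, h0]
    field_simp
    ring
  | more k ih1 ih2 =>
    rw [cf.E_rec, ih1, ih2, P_succ, P_succ]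
    have ht : cf.t (k + 2) = (cf.t (k+1))⁻¹ - cf.a (k + 2) := cf.t_succ (k+1)
    have htp := cf.t_pos (k + 1)
    rw [ht]
    field_simp
    rw [cf.P_succ k]
    ring

lemma l_eq_P (k : ℕ) : cf.l k = cf.P k := by
  have h := cf.E_eq k
  have h2 : cf.l k = |cf.E k| := by rw [l, E, abs_sub_comm]
  rw [h2, h, abs_mul, abs_pow, abs_neg, abs_one, one_pow, one_mul,
    abs_of_pos (cf.P_pos k)]

lemma l_pos (k : ℕ) : 0 < cf.l k := by rw [l_eq_P]; exact cf.P_pos k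
lemma l_lt_one (k : ℕ) : cf.l k < 1 := by rw [l_eq_P]; exact cf.P_lt_one k

lemma l_succ_lt (k : ℕ) : cf.l (k + 1) < cf.l k := by
  rw [l_eq_P, l_eq_P, P_succ]
  nlinarith [cf.P_pos k, cf.t_pos (k+1), cf.t_lt_one (k+1)]

lemma E_sign (k : ℕ) : cf.E k = (-1 : ℝ) ^ k * cf.l k := by
  rw [l_eq_P, E_eq]

lemma l_rec (k : ℕ) : cf.l k = cf.a (k + 2) * cf.l (k + 1) + cf.l (k + 2) := by
  have hE := cf.E_rec k
  rw [cf.E_sign k, cf.E_sign (k+1), cf.E_sign (k+2), pow_succ, pow_succ] at hE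
  have hs : ((-1:ℝ) ^ k) * ((-1:ℝ) ^ k) = 1 := by
    rw [← pow_add, Even.neg_one_pow ⟨k, rfl⟩]
  linear_combination (-(-1:ℝ)^k) * hE - (cf.l k - cf.a (k+2) * cf.l (k+1) - cf.l (k+2)) * hs

lemma det (k : ℕ) : (cf.p (k+1) : ℤ) * cf.q k - cf.p k * cf.q (k+1) = (-1) ^ k := by
  induction k with
  | zero => simp [cf.p_zero, cf.p_one, cf.q_zero, cf.q_one]
  | succ k ih =>
    simp only [cf.p_rec k, cf.q_rec k]
    push_cast
    push_cast at ih
    linear_combination (-1 : ℤ) * ih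

lemma best (k : ℕ) (m : ℤ) (hm : m ≠ 0) (hle : |m| ≤ (cf.q (k+1) : ℤ)) (z : ℤ) :
    cf.l (k+1) ≤ |(m:ℝ) * θ - z| := by
  set s : ℤ := (-1) ^ k with hsdef
  have hs : s * s = 1 := by rw [hsdef, ← pow_add, Even.neg_one_pow ⟨k, rfl⟩]
  have hdet : (cf.p (k+1) : ℤ) * cf.q k - cf.p k * cf.q (k+1) = s := cf.det k
  set u : ℤ := -s * (m * cf.p k - z * cf.q k) with hu
  set v : ℤ := -s * (z * cf.q (k+1) - m * cf.p (k+1)) with hv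
  have hm1 : u * cf.q (k+1) + v * cf.q k = m := by
    rw [hu, hv]; linear_combination (s * m) * hdet + m * hs
  have hz1 : u * cf.p (k+1) + v * cf.p k = z := by
    rw [hu, hv]; linear_combination (s * z) * hdet + z * hs
  have hm1R : (u : ℝ) * cf.q (k+1) + v * cf.q k = m := by exact_mod_cast congrArg (Int.cast : ℤ → ℝ) hm1
  have hz1R : (u : ℝ) * cf.p (k+1) + v * cf.p k = z := by exact_mod_cast congrArg (Int.cast : ℤ → ℝ) hz1
  have hreal : (m:ℝ) * θ - z = (u : ℝ) * cf.E (k+1) + v * cf.E k := by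
    simp only [E]; linear_combination θ * hm1R.symm + hz1R
  have hX : (m:ℝ) * θ - z = (-1:ℝ) ^ k * ((v:ℝ) * cf.l k - u * cf.l (k+1)) := by
    rw [hreal, cf.E_sign k, cf.E_sign (k+1), pow_succ]; ring
  have habs : |(m:ℝ) * θ - z| = |(v:ℝ) * cf.l k - (u:ℝ) * cf.l (k+1)| := by
    rw [hX, abs_mul, abs_pow, abs_neg, abs_one, one_pow, one_mul]
  rw [habs]
  clear_value s u v
  have hl1 := cf.l_pos (k+1)
  have hl0 := cf.l_pos k
  have hl01 : cf.l (k+1) ≤ cf.l k := (cf.l_succ_lt k).le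
  have hne : ¬ (u = 0 ∧ v = 0) := by
    rintro ⟨h1, h2⟩; rw [h1, h2] at hm1; simp at hm1; exact hm (by omega)
  rcases lt_trichotomy (u * v) 0 with huv | huv | huv
  · -- opposite strict signs
    rcases mul_neg_iff.mp huv with ⟨hup, hvn⟩ | ⟨hun, hvp⟩
    · have hu1 : (1:ℝ) ≤ (u:ℝ) := by exact_mod_cast hup
      have hv1 : (v:ℝ) ≤ 0 := by exact_mod_cast hvn.le
      nlinarith [neg_le_abs ((v:ℝ) * cf.l k - (u:ℝ) * cf.l (k+1))]
    · have hu1 : (u:ℝ) ≤ 0 := by exact_mod_cast hun.le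
      have hv1 : (1:ℝ) ≤ (v:ℝ) := by exact_mod_cast hvp
      nlinarith [le_abs_self ((v:ℝ) * cf.l k - (u:ℝ) * cf.l (k+1))]
  · -- one of them is zero
    rcases mul_eq_zero.mp huv with h0 | h0
    · have hv1 : v ≠ 0 := fun h => hne ⟨h0, h⟩
      have hv2 : (1:ℝ) ≤ |(v:ℝ)| := by exact_mod_cast Int.one_le_abs hv1
      have hu0 : (u:ℝ) = 0 := by exact_mod_cast h0
      rcases abs_cases (v:ℝ) with ⟨he, _⟩ | ⟨he, _⟩
      · nlinarith [le_abs_self ((v:ℝ) * cf.l k - (u:ℝ) * cf.l (k+1))]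
      · nlinarith [neg_le_abs ((v:ℝ) * cf.l k - (u:ℝ) * cf.l (k+1))]
    · have hu1 : u ≠ 0 := fun h => hne ⟨h, h0⟩
      have hu2 : (1:ℝ) ≤ |(u:ℝ)| := by exact_mod_cast Int.one_le_abs hu1
      have hv0 : (v:ℝ) = 0 := by exact_mod_cast h0
      rcases abs_cases (u:ℝ) with ⟨he, _⟩ | ⟨he, _⟩
      · nlinarith [neg_le_abs ((v:ℝ) * cf.l k - (u:ℝ) * cf.l (k+1))]
      · nlinarith [le_abs_self ((v:ℝ) * cf.l k - (u:ℝ) * cf.l (k+1))]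
  · -- same strict signs: contradiction with size of m
    exfalso
    have hq0 : (1:ℤ) ≤ cf.q k := by exact_mod_cast cf.q_pos k
    have hq1 : (1:ℤ) ≤ cf.q (k+1) := by exact_mod_cast cf.q_pos (k+1)
    rcases mul_pos_iff.mp huv with ⟨hup, hvp⟩ | ⟨hun, hvn⟩
    · have e1 : (1:ℤ) * cf.q (k+1) ≤ u * cf.q (k+1) :=
        mul_le_mul_of_nonneg_right hup (by omega)
      have e2 : (1:ℤ) * cf.q k ≤ v * cf.q k :=
        mul_le_mul_of_nonneg_right hvp (by omega)
      have h3 := le_abs_self m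
      linarith
    · have e1 : u * cf.q (k+1) ≤ (-1) * cf.q (k+1) :=
        mul_le_mul_of_nonneg_right (by omega) (by omega)
      have e2 : v * cf.q k ≤ (-1) * cf.q k :=
        mul_le_mul_of_nonneg_right (by omega) (by omega)
      have h3 := neg_abs_le m
      linarith

lemma fract_lower (k : ℕ) (m : ℤ) (hm : m ≠ 0) (hle : |m| ≤ (cf.q (k+1) : ℤ)) :
    cf.l (k+1) ≤ Int.fract ((m:ℝ) * θ) := by
  have h := cf.best k m hm hle ⌊(m:ℝ) * θ⌋
  rwa [show (m:ℝ) * θ - (⌊(m:ℝ)*θ⌋ : ℝ) = Int.fract ((m:ℝ)*θ) from rfl,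
    abs_of_nonneg (Int.fract_nonneg _)] at h

end CFData

lemma addCircle_coe_eq_iff (a b : ℝ) :
    (a : AddCircle (1:ℝ)) = b ↔ ∃ z : ℤ, a - b = z := by
  rw [← sub_eq_zero, ← AddCircle.coe_sub, AddCircle.coe_eq_zero_iff]
  constructor
  · rintro ⟨z, hz⟩; exact ⟨z, by simpa using hz.symm⟩
  · rintro ⟨z, hz⟩; exact ⟨z, by simp [hz]⟩

/-- **Orbit partition.** For irrational `θ ∈ (0,1)`, any `x ∈ ℝ/ℤ` and any `n ≥ 3`, the finite
orbit `{x + i θ : 0 ≤ i ≤ q n}` partitions the circle into arcs whose lengths all lie between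
`l n` and `l (n-2)`: from each orbit point `x + i θ`, the gap to the next orbit point in the
positive direction is some `ℓ ∈ [l n, l (n-2)]`, the point at distance `ℓ` is again an orbit
point, and no orbit point lies strictly inside the gap. -/
theorem orbit_partition (θ : ℝ) (hθ : Irrational θ) (hmem : θ ∈ Set.Ioo (0 : ℝ) 1)
    (cf : CFData θ) (x : AddCircle (1 : ℝ)) (n : ℕ) (hn : 3 ≤ n) :
    ∀ i ≤ cf.q n, ∃ ℓ : ℝ, cf.l n ≤ ℓ ∧ ℓ ≤ cf.l (n - 2) ∧
      (∃ j ≤ cf.q n, j ≠ i ∧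
        x + (((j : ℝ) * θ : ℝ) : AddCircle (1 : ℝ)) =
          x + (((i : ℝ) * θ : ℝ) : AddCircle (1 : ℝ)) + (ℓ : AddCircle (1 : ℝ))) ∧
      ∀ k ≤ cf.q n, ∀ u ∈ Set.Ioo (0 : ℝ) ℓ,
        x + (((k : ℝ) * θ : ℝ) : AddCircle (1 : ℝ)) ≠
          x + (((i : ℝ) * θ : ℝ) : AddCircle (1 : ℝ)) + (u : AddCircle (1 : ℝ)) := by
  obtain ⟨k, rfl⟩ : ∃ k, n = k + 3 := ⟨n - 3, by omega⟩
  have hidx : k + 3 - 2 = k + 1 := by omega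
  rw [hidx]
  intro i hi
  classical
  have hNpos : 1 ≤ cf.q (k+3) := cf.q_pos (k+3)
  set g : ℕ → ℝ := fun j => Int.fract (((j:ℝ) - (i:ℝ)) * θ) with hg
  set T : Finset ℕ := (Finset.range (cf.q (k+3) + 1)).filter (fun j => j ≠ i) with hT
  have hmemT : ∀ j, j ∈ T ↔ (j ≤ cf.q (k+3) ∧ j ≠ i) := by
    intro j; simp [hT, Finset.mem_filter, Finset.mem_range, Nat.lt_succ_iff]
  have hTne : T.Nonempty := by
    rcases eq_or_ne i 0 with h | h
    · exact ⟨1, (hmemT 1).mpr ⟨hNpos, by omega⟩⟩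
    · exact ⟨0, (hmemT 0).mpr ⟨by omega, by omega⟩⟩
  have hSne : (T.image g).Nonempty := hTne.image g
  set ℓ := (T.image g).min' hSne with hldef
  obtain ⟨j₀, hj₀T, hj₀⟩ : ∃ j ∈ T, g j = ℓ := Finset.mem_image.mp ((T.image g).min'_mem hSne)
  have hmin : ∀ j ∈ T, ℓ ≤ g j := fun j hj => Finset.min'_le _ _ (Finset.mem_image_of_mem g hj)
  have hglow : ∀ j ∈ T, cf.l (k+3) ≤ g j := by
    intro j hj
    obtain ⟨hjN, hjne⟩ := (hmemT j).mp hj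
    have hm0 : ((j:ℤ) - i) ≠ 0 := sub_ne_zero.mpr (by exact_mod_cast hjne)
    have habs : |(j:ℤ) - (i:ℤ)| ≤ (cf.q (k+3) : ℤ) := by
      rw [abs_le]; omega
    have h := cf.fract_lower (k+2) ((j:ℤ) - i) hm0 habs
    have hcast : ((((j:ℤ) - (i:ℤ)):ℤ):ℝ) = (j:ℝ) - i := by push_cast; ring
    rw [hg]; dsimp only; rw [← hcast]; exact h
  have hlowℓ : cf.l (k+3) ≤ ℓ := hj₀ ▸ hglow j₀ hj₀T
  have hq23 : cf.q (k+2) < cf.q (k+3) := cf.q_lt (k+1)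
  have hq2 : 1 ≤ cf.q (k+2) := cf.q_pos (k+2)
  have hsum : cf.l (k+2) + cf.l (k+3) ≤ cf.l (k+1) := by
    have h1 := cf.l_rec (k+1)
    have h2 := cf.a_pos (k+2)
    have h3 := cf.l_pos (k+2)
    have h4 : (1:ℝ) ≤ (cf.a (k+3) : ℝ) := by exact_mod_cast h2
    nlinarith
  have hl23 : cf.l (k+3) ≤ cf.l (k+2) := (cf.l_succ_lt (k+2)).le
  have hl12 : cf.l (k+2) ≤ cf.l (k+1) := (cf.l_succ_lt (k+1)).le
  have hl1lt : cf.l (k+1) < 1 := cf.l_lt_one (k+1)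
  have hl2pos := cf.l_pos (k+2)
  have hl3pos := cf.l_pos (k+3)
  have hE2 := cf.E_sign (k+2)
  have hE3 := cf.E_sign (k+3)
  have hq2R : (cf.q (k+2) : ℝ) * θ = (cf.p (k+2) : ℝ) + cf.E (k+2) := by
    rw [CFData.E]; ring
  have hq3R : (cf.q (k+3) : ℝ) * θ = (cf.p (k+3) : ℝ) + cf.E (k+3) := by
    rw [CFData.E]; ring
  have hcand : ∃ j ∈ T, g j ≤ cf.l (k+1) := by
    rcases Nat.even_or_odd k with hke | hko
    · -- k even : E(k+2) = l(k+2), E(k+3) = -l(k+3)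
      have e2 : Even (k+2) := by rcases hke with ⟨t, rfl⟩; exact ⟨t+1, by ring⟩
      have s2 : cf.E (k+2) = cf.l (k+2) := by rw [hE2, e2.neg_one_pow, one_mul]
      have o3 : Odd (k+3) := by rcases hke with ⟨t, rfl⟩; exact ⟨t+1, by ring⟩
      have s3 : cf.E (k+3) = -cf.l (k+3) := by
        rw [hE3, o3.neg_one_pow]; ring
      by_cases hc : i + cf.q (k+2) ≤ cf.q (k+3)
      · refine ⟨i + cf.q (k+2), (hmemT _).mpr ⟨hc, by omega⟩, ?_⟩
        have harg : (((i + cf.q (k+2) : ℕ) : ℝ) - i) * θ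
            = ((cf.p (k+2) : ℤ) : ℝ) + cf.l (k+2) := by
          push_cast; linear_combination hq2R + s2
        rw [hg]; dsimp only
        rw [harg, Int.fract_intCast_add, Int.fract_eq_self.mpr ⟨hl2pos.le, by linarith⟩]
        exact hl12
      · refine ⟨i + cf.q (k+2) - cf.q (k+3), (hmemT _).mpr ⟨by omega, by omega⟩, ?_⟩
        have hge : cf.q (k+3) ≤ i + cf.q (k+2) := by omega
        have harg : (((i + cf.q (k+2) - cf.q (k+3) : ℕ) : ℝ) - i) * θ
            = (((cf.p (k+2) : ℤ) - cf.p (k+3) : ℤ) : ℝ) + (cf.l (k+2) + cf.l (k+3)) := by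
          push_cast [hge]; linear_combination hq2R - hq3R + s2 - s3
        rw [hg]; dsimp only
        rw [harg, Int.fract_intCast_add, Int.fract_eq_self.mpr ⟨by positivity, by linarith⟩]
        linarith
    · -- k odd : E(k+2) = -l(k+2), E(k+3) = l(k+3)
      have o2 : Odd (k+2) := by rcases hko with ⟨t, rfl⟩; exact ⟨t+1, by ring⟩
      have s2 : cf.E (k+2) = -cf.l (k+2) := by rw [hE2, o2.neg_one_pow]; ring
      have e3 : Even (k+3) := by rcases hko with ⟨t, rfl⟩; exact ⟨t+2, by ring⟩
      have s3 : cf.E (k+3) = cf.l (k+3) := by rw [hE3, e3.neg_one_pow, one_mul]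
      by_cases hc : cf.q (k+2) ≤ i
      · refine ⟨i - cf.q (k+2), (hmemT _).mpr ⟨by omega, by omega⟩, ?_⟩
        have harg : (((i - cf.q (k+2) : ℕ) : ℝ) - i) * θ
            = ((-(cf.p (k+2) : ℤ) : ℤ) : ℝ) + cf.l (k+2) := by
          push_cast [hc]; linear_combination -hq2R - s2
        rw [hg]; dsimp only
        rw [harg, Int.fract_intCast_add, Int.fract_eq_self.mpr ⟨hl2pos.le, by linarith⟩]
        exact hl12
      · refine ⟨i + (cf.q (k+3) - cf.q (k+2)), (hmemT _).mpr ⟨by omega, by omega⟩, ?_⟩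
        have harg : (((i + (cf.q (k+3) - cf.q (k+2)) : ℕ) : ℝ) - i) * θ
            = (((cf.p (k+3) : ℤ) - cf.p (k+2) : ℤ) : ℝ) + (cf.l (k+2) + cf.l (k+3)) := by
          push_cast [hq23.le]; linear_combination hq3R - hq2R + s3 - s2
        rw [hg]; dsimp only
        rw [harg, Int.fract_intCast_add, Int.fract_eq_self.mpr ⟨by positivity, by linarith⟩]
        linarith
  obtain ⟨j₁, hj₁T, hj₁le⟩ := hcand
  have hupℓ : ℓ ≤ cf.l (k+1) := le_trans (hmin j₁ hj₁T) hj₁le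
  refine ⟨ℓ, hlowℓ, hupℓ, ?_, ?_⟩
  · obtain ⟨hj₀N, hj₀ne⟩ := (hmemT j₀).mp hj₀T
    refine ⟨j₀, hj₀N, hj₀ne, ?_⟩
    rw [add_assoc]
    congr 1
    rw [← AddCircle.coe_add, addCircle_coe_eq_iff]
    refine ⟨⌊((j₀:ℝ) - i) * θ⌋, ?_⟩
    have hfr := Int.self_sub_fract (((j₀:ℝ) - i) * θ)
    have hℓeq : ℓ = Int.fract (((j₀:ℝ) - i) * θ) := by rw [← hj₀, hg]
    rw [hℓeq]
    linear_combination hfr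
  · intro k' hk' u hu heq
    rw [add_assoc] at heq
    have heq2 := add_left_cancel heq
    rw [← AddCircle.coe_add, addCircle_coe_eq_iff] at heq2
    obtain ⟨z, hz⟩ := heq2
    have hufr : Int.fract (((k':ℝ) - i) * θ) = u := by
      rw [Int.fract_eq_iff]
      exact ⟨hu.1.le, by linarith [hu.2], ⟨z, by linear_combination hz⟩⟩
    rcases eq_or_ne k' i with h | h
    · rw [h] at hufr
      simp at hufr
      linarith [hu.1]
    · have hle2 : ℓ ≤ u := hufr ▸ hmin k' ((hmemT k').mpr ⟨hk', h⟩)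
      linarith [hu.2]
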